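/- Fix k ≥ 3. Let C be a partial k-net every finite subset of which is open, let A ⊆ C be such that A ≤_o C, and let c ∈ C ∖ A be such that either c is a point incident with exactly two lines of A, or c is a line incident with exactly one point of A. Then A ∪ {c} ≤_o C. -/

import Mathlib

namespace KNet

variable {P L : Type}

/-- The lines of `X` incident with the point `p`. -/
def linesThru (I : P → L → Prop) (X : Set (P ⊕ L)) (p : P) : Set L :=
  {l : L | Sum.inr l ∈ X ∧ I p l}

/-- The points of `X` incident with the line `l`. -/
def pointsOn (I : P → L → Prop) (X : Set (P ⊕ L)) (l : L) : Set P :=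
  {p : P | Sum.inl p ∈ X ∧ I p l}

/-- An element is hyperfree in `X` if it is a point incident with at most two lines of `X`,
or a line incident with at most one point of `X`. -/
def Hyperfree (I : P → L → Prop) (X : Set (P ⊕ L)) : (P ⊕ L) → Prop
  | Sum.inl p => (linesThru I X p).encard ≤ 2
  | Sum.inr l => (pointsOn I X l).encard ≤ 1

/-- `B` is open over `A`. -/
def OpenOver (I : P → L → Prop) (A B : Set (P ⊕ L)) : Prop :=
  ∀ C : Set (P ⊕ L), C ⊆ B \ A → C.Finite → C.Nonempty →
    ∃ c ∈ C, Hyperfree I (A ∪ C) c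

/-- `B` is open. -/
def IsOpen (I : P → L → Prop) (B : Set (P ⊕ L)) : Prop :=
  ∀ C : Set (P ⊕ L), C ⊆ B → C.Finite → C.Nonempty →
    ∃ c ∈ C, Hyperfree I C c

/-- `X` is a partial `k`-net, with parallelism-type predicates `Pc i` on lines:
every line of `X` satisfies some `Pc i`; for every point of `X` and every `i` there is
at most one line of `X` in `Pc i` incident with it; and for `i ≠ j` any line of `X` in
`Pc i` and any line of `X` in `Pc j` are incident with at most one common point of `X`. -/
def IsPartialNet (k : ℕ) (I : P → L → Prop) (Pc : Fin k → L → Prop)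
    (X : Set (P ⊕ L)) : Prop :=
  (∀ l : L, Sum.inr l ∈ X → ∃ i : Fin k, Pc i l) ∧
  (∀ p : P, Sum.inl p ∈ X → ∀ i : Fin k, ∀ l l' : L,
    Sum.inr l ∈ X → Sum.inr l' ∈ X → Pc i l → Pc i l' → I p l → I p l' → l = l') ∧
  (∀ i j : Fin k, i ≠ j → ∀ l l' : L, Sum.inr l ∈ X → Sum.inr l' ∈ X →
    Pc i l → Pc j l' → ∀ p p' : P, Sum.inl p ∈ X → Sum.inl p' ∈ X →
      I p l → I p l' → I p' l → I p' l' → p = p')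

end KNet

open KNet

/-!
Given a finite nonempty `C` outside `A ∪ {c}`, openness of `A` applied to `C ∪ {c}` yields an
element hyperfree in `A ∪ C ∪ {c}`. If it lies in `C` we are done. Otherwise it is `c`; as its
incidence count over `A` already attains the bound, `c` is incident with nothing in `C`, so
adding `c` changes no count of an element of `C`, and a witness for `C` over `A` serves.
-/

namespace KNet

variable {P L : Type} (I : P → L → Prop)

def Incident : P ⊕ L → P ⊕ L → Prop
  | .inl p, .inr l => I p l
  | .inr l, .inl p => I p l
  | _, _ => False

/-- `c` is hyperfree in `A`, with equality in the bound. -/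
def IsTight (A : Set (P ⊕ L)) : P ⊕ L → Prop
  | .inl p => (linesThru I A p).encard = 2
  | .inr l => (pointsOn I A l).encard = 1

variable {I}

theorem hyperfree_insert_iff {X : Set (P ⊕ L)} {c e : P ⊕ L} (h : ¬ Incident I c e) :
    Hyperfree I (insert c X) e ↔ Hyperfree I X e := by
  rcases e with p | l <;> rcases c with q | m <;> simp only [Hyperfree] <;> congr! 2 <;>
    ext <;> simp only [linesThru, pointsOn, Set.mem_insert_iff, Set.mem_ofPred_eq] <;>
    grind [Incident]

theorem IsTight.mem_of_incident {A X : Set (P ⊕ L)} {c e : P ⊕ L} (ht : IsTight I A c)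
    (hAX : A ⊆ X) (hc : Hyperfree I X c) (he : e ∈ X) (hinc : Incident I c e) : e ∈ A := by
  rcases c with p | l <;> rcases e with q | m <;> simp only [Incident] at hinc
  · have hsub : linesThru I A p ⊆ linesThru I X p := fun _ h => ⟨hAX h.1, h.2⟩
    have hq : m ∈ linesThru I X p := ⟨he, hinc⟩
    rw [← (Set.finite_of_encard_eq_coe ht).eq_of_subset_of_encard_le hsub (ht ▸ hc)] at hq
    exact hq.1
  · have hsub : pointsOn I A l ⊆ pointsOn I X l := fun _ h => ⟨hAX h.1, h.2⟩
    have hq : q ∈ pointsOn I X l := ⟨he, hinc⟩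
    rw [← (Set.finite_of_encard_eq_coe ht).eq_of_subset_of_encard_le hsub (ht ▸ hc)] at hq
    exact hq.1

theorem openOver_union_singleton_of_isTight {A : Set (P ⊕ L)} {c : P ⊕ L}
    (hA : OpenOver I A Set.univ) (hc : c ∉ A) (ht : IsTight I A c) :
    OpenOver I (A ∪ {c}) Set.univ := by
  intro C hC hfin hne
  have hCA : ∀ x ∈ C, x ∉ A := fun x hx hxA => (hC hx).2 (Or.inl hxA)
  have hunion : A ∪ {c} ∪ C = insert c (A ∪ C) := by
    rw [Set.union_singleton, Set.insert_union]
  have hsub : insert c C ⊆ Set.univ \ A := by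
    rintro x (rfl | hx)
    exacts [⟨trivial, hc⟩, ⟨trivial, hCA x hx⟩]
  obtain ⟨d, hd, hhf⟩ := hA (insert c C) hsub (hfin.insert c) (Set.insert_nonempty c C)
  rw [Set.union_insert, ← hunion] at hhf
  rcases hd with hdc | hdC
  · subst d
    obtain ⟨e, heC, he⟩ := hA C (fun x hx => ⟨trivial, hCA x hx⟩) hfin hne
    have hinc : ¬ Incident I c e := fun hinc =>
      hCA e heC (ht.mem_of_incident (fun _ hx => Or.inl (Or.inl hx)) hhf (Or.inr heC) hinc)
    refine ⟨e, heC, ?_⟩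
    rwa [hunion, hyperfree_insert_iff hinc]
  · exact ⟨d, hdC, hhf⟩

end KNet

theorem stmt14_general {P L : Type}
    (I : P → L → Prop)
    (A : Set (P ⊕ L)) (hA : OpenOver I A Set.univ)
    (c : P ⊕ L) (hc : c ∉ A)
    (hcase :
      (∃ p : P, c = Sum.inl p ∧ (linesThru I A p).encard = 2) ∨
      (∃ l : L, c = Sum.inr l ∧ (pointsOn I A l).encard = 1)) :
    OpenOver I (A ∪ {c}) Set.univ := by
  have ht : IsTight I A c := by
    rcases hcase with ⟨p, rfl, h⟩ | ⟨l, rfl, h⟩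
    exacts [h, h]
  exact openOver_union_singleton_of_isTight hA hc ht

theorem stmt14 {P L : Type} (k : ℕ) (hk : 3 ≤ k)
    (I : P → L → Prop) (Pc : Fin k → L → Prop)
    (hpartial : IsPartialNet k I Pc (Set.univ : Set (P ⊕ L)))
    (hopen : IsOpen I (Set.univ : Set (P ⊕ L)))
    (A : Set (P ⊕ L)) (hA : OpenOver I A Set.univ)
    (c : P ⊕ L) (hc : c ∉ A)
    (hcase :
      (∃ p : P, c = Sum.inl p ∧ (linesThru I A p).encard = 2) ∨
      (∃ l : L, c = Sum.inr l ∧ (pointsOn I A l).encard = 1)) :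
    OpenOver I (A ∪ {c}) Set.univ :=
  stmt14_general I A hA c hc hcase
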